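/- There exist absolute constants c, C > 0 such that for every p ∈ (0, 1/2], c · p · √(ln(1/p)) ≤ φ(Φ⁻¹(p)) ≤ C · p · √(ln(1/p)). (This is the Gaussian surface area of a halfspace of Gaussian volume p, up to universal constant factors.) -/

import Mathlib

open Real

/-- Standard Gaussian density. -/
noncomputable def gphi (x : ℝ) : ℝ := (Real.sqrt (2 * Real.pi))⁻¹ * Real.exp (-(x ^ 2) / 2)

/-- Standard Gaussian CDF. -/
noncomputable def Phi (r : ℝ) : ℝ := ∫ x in Set.Iic r, gphi x

/-- Inverse of the standard Gaussian CDF (on (0,1)). -/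
noncomputable def PhiInv : ℝ → ℝ := Function.invFun Phi

open MeasureTheory Set Filter Topology

lemma sqrt2pi_pos : 0 < Real.sqrt (2 * Real.pi) :=
  Real.sqrt_pos.2 (by positivity)

lemma one_le_sqrt2pi : 1 ≤ Real.sqrt (2 * Real.pi) := by
  rw [show (1:ℝ) = Real.sqrt 1 by simp]
  exact Real.sqrt_le_sqrt (by nlinarith [Real.pi_gt_three])

lemma sqrt2pi_le_three : Real.sqrt (2 * Real.pi) ≤ 3 := by
  rw [show (3:ℝ) = Real.sqrt 9 by rw [show (9:ℝ) = 3^2 by norm_num, Real.sqrt_sq]; norm_num]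
  exact Real.sqrt_le_sqrt (by nlinarith [Real.pi_lt_d2])

lemma gphi_pos (x : ℝ) : 0 < gphi x := by
  unfold gphi; positivity

lemma gphi_le_one (x : ℝ) : gphi x ≤ 1 := by
  unfold gphi
  have h1 : (Real.sqrt (2 * Real.pi))⁻¹ ≤ 1 := by
    rw [inv_le_one_iff₀]; right; exact one_le_sqrt2pi
  have h2 : Real.exp (-(x ^ 2) / 2) ≤ 1 := by
    rw [Real.exp_le_one_iff]; nlinarith [sq_nonneg x]
  nlinarith [Real.exp_pos (-(x^2)/2)]

lemma gphi_neg (x : ℝ) : gphi (-x) = gphi x := by unfold gphi; ring_nf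

lemma continuous_gphi : Continuous gphi := by
  unfold gphi; fun_prop

lemma integrable_gphi : MeasureTheory.Integrable gphi := by
  have := (integrable_exp_neg_mul_sq (b := 1/2) (by norm_num)).const_mul
    (Real.sqrt (2 * Real.pi))⁻¹
  convert this using 2 with x
  unfold gphi; ring_nf

lemma integral_gphi : ∫ x, gphi x = 1 := by
  unfold gphi
  rw [MeasureTheory.integral_const_mul]
  have : ∀ x : ℝ, Real.exp (-(x ^ 2) / 2) = Real.exp (-(1/2) * x ^ 2) := by
    intro x; ring_nf
  simp_rw [this, integral_gaussian]
  rw [show Real.pi / (1/2) = 2 * Real.pi by ring]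
  field_simp


lemma hasDerivAt_gphi (x : ℝ) : HasDerivAt gphi (-x * gphi x) x := by
  have h1 : HasDerivAt (fun y : ℝ => -(y ^ 2) / 2) (-x) x := by
    have := ((hasDerivAt_pow 2 x).neg).div_const 2
    refine this.congr_deriv ?_; push_cast; ring
  have h2 := (h1.exp).const_mul (Real.sqrt (2 * Real.pi))⁻¹
  refine h2.congr_deriv ?_
  unfold gphi; ring

lemma gphi_tendsto_zero : Tendsto gphi atTop (𝓝 0) := by
  have h2 : Tendsto (fun x : ℝ => Real.exp (-(x^2)/2)) atTop (𝓝 0) := by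
    apply Real.tendsto_exp_atBot.comp
    apply Filter.Tendsto.atBot_div_const (by norm_num)
    exact tendsto_neg_atBot_iff.2 (tendsto_pow_atTop (by norm_num))
  apply squeeze_zero_norm _ h2
  intro x
  rw [Real.norm_of_nonneg (gphi_pos x).le]
  unfold gphi
  have h1 := inv_le_one_of_one_le₀ one_le_sqrt2pi
  nlinarith [Real.exp_pos (-(x^2)/2), sqrt2pi_pos]

noncomputable def Qf (t : ℝ) : ℝ := ∫ x in Set.Ioi t, gphi x

lemma integrableOn_mul_gphi (t : ℝ) : IntegrableOn (fun x => x * gphi x) (Set.Ioi t) := by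
  apply MeasureTheory.Integrable.integrableOn
  have := (integrable_mul_exp_neg_mul_sq (b := 1/2) (by norm_num)).const_mul
    (Real.sqrt (2 * Real.pi))⁻¹
  convert this using 2 with x
  unfold gphi; ring_nf

lemma integral_Ioi_mul_gphi (t : ℝ) : ∫ x in Set.Ioi t, x * gphi x = gphi t := by
  have hderiv : ∀ x ∈ Set.Ici t, HasDerivAt (fun y => -gphi y) (x * gphi x) x := by
    intro x _
    have := (hasDerivAt_gphi x).neg
    refine this.congr_deriv ?_; ring
  have htend : Tendsto (fun y => -gphi y) atTop (𝓝 0) := by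
    simpa using gphi_tendsto_zero.neg
  have := integral_Ioi_of_hasDerivAt_of_tendsto' hderiv (integrableOn_mul_gphi t) htend
  simpa using this

lemma mill_upper {t : ℝ} (ht : 0 < t) : Qf t ≤ gphi t / t := by
  have key : Qf t ≤ ∫ x in Set.Ioi t, t⁻¹ * (x * gphi x) := by
    apply setIntegral_mono_on integrable_gphi.integrableOn
      ((integrableOn_mul_gphi t).const_mul t⁻¹) measurableSet_Ioi
    intro x hx
    have hx' : t ≤ x := (le_of_lt hx)
    have h1 : 1 ≤ t⁻¹ * x := by
      rw [inv_mul_eq_div, le_div_iff₀ ht]; linarith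
    nlinarith [gphi_pos x]
  rw [MeasureTheory.integral_const_mul, integral_Ioi_mul_gphi] at key
  rw [div_eq_inv_mul]; exact key

noncomputable def millg (x : ℝ) : ℝ := x / (x ^ 2 + 1) * gphi x

lemma hasDerivAt_millg (x : ℝ) :
    HasDerivAt millg ((1 - 2 * x ^ 2 - x ^ 4) / (x ^ 2 + 1) ^ 2 * gphi x) x := by
  have hd : (x:ℝ)^2 + 1 ≠ 0 := by positivity
  have h1 : HasDerivAt (fun y : ℝ => y / (y ^ 2 + 1))
      ((1 - x ^ 2) / (x ^ 2 + 1) ^ 2) x := by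
    have hden : HasDerivAt (fun y : ℝ => y ^ 2 + 1) (2 * x) x := by
      simpa using (hasDerivAt_pow 2 x).add_const 1
    have := (hasDerivAt_id x).div hden hd
    refine this.congr_deriv ?_
    field_simp; simp only [id]; ring
  have := h1.mul (hasDerivAt_gphi x)
  refine this.congr_deriv ?_
  field_simp
  ring

lemma millg_tendsto_zero : Tendsto millg atTop (𝓝 0) := by
  apply squeeze_zero_norm _ gphi_tendsto_zero
  intro x
  unfold millg
  rw [norm_mul, Real.norm_of_nonneg (gphi_pos x).le]
  have h2 : ‖x / (x ^ 2 + 1)‖ ≤ 1 := by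
    rw [norm_div, Real.norm_of_nonneg (by positivity : (0:ℝ) ≤ x ^ 2 + 1),
      div_le_one (by positivity)]
    calc ‖x‖ = |x| := rfl
    _ ≤ x ^ 2 + 1 := by nlinarith [sq_abs x, sq_nonneg (|x| - 1)]
  nlinarith [gphi_pos x, norm_nonneg (x / (x^2+1))]

lemma integrableOn_neg_millg_deriv (t : ℝ) :
    IntegrableOn (fun x => -((1 - 2 * x ^ 2 - x ^ 4) / (x ^ 2 + 1) ^ 2 * gphi x))
      (Set.Ioi t) := by
  apply MeasureTheory.Integrable.mono (integrable_gphi.integrableOn)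
  · apply Continuous.aestronglyMeasurable
    apply Continuous.neg
    exact (Continuous.div (by continuity) (by continuity)
      (fun x => by positivity)).mul continuous_gphi
  · filter_upwards with x
    rw [Real.norm_of_nonneg (gphi_pos x).le, norm_neg, norm_mul,
      Real.norm_of_nonneg (gphi_pos x).le]
    have : ‖(1 - 2 * x ^ 2 - x ^ 4) / (x ^ 2 + 1) ^ 2‖ ≤ 1 := by
      rw [norm_div, Real.norm_of_nonneg (by positivity : (0:ℝ) ≤ (x ^ 2 + 1) ^ 2),
        div_le_one (by positivity), Real.norm_eq_abs, abs_le]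
      constructor <;> nlinarith [sq_nonneg x, sq_nonneg (x^2)]
    nlinarith [gphi_pos x, norm_nonneg ((1 - 2 * x ^ 2 - x ^ 4) / (x ^ 2 + 1) ^ 2)]

lemma mill_lower (t : ℝ) : t / (t ^ 2 + 1) * gphi t ≤ Qf t := by
  have hderiv : ∀ x ∈ Set.Ici t, HasDerivAt (fun y => -millg y)
      (-((1 - 2 * x ^ 2 - x ^ 4) / (x ^ 2 + 1) ^ 2 * gphi x)) x :=
    fun x _ => (hasDerivAt_millg x).neg
  have htend : Tendsto (fun y => -millg y) atTop (𝓝 0) := by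
    simpa using millg_tendsto_zero.neg
  have heq := integral_Ioi_of_hasDerivAt_of_tendsto' hderiv
    (integrableOn_neg_millg_deriv t) htend
  have hle : (∫ x in Set.Ioi t, -((1 - 2 * x ^ 2 - x ^ 4) / (x ^ 2 + 1) ^ 2 * gphi x))
      ≤ Qf t := by
    apply setIntegral_mono_on (integrableOn_neg_millg_deriv t)
      integrable_gphi.integrableOn measurableSet_Ioi
    intro x _
    have h1 : -((1 - 2 * x ^ 2 - x ^ 4) / (x ^ 2 + 1) ^ 2) ≤ 1 := by
      rw [neg_le, ← neg_one_mul, ← le_div_iff₀]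
      · rw [div_div]
        rw [le_div_iff₀ (by positivity)]
        nlinarith [sq_nonneg x, sq_nonneg (x^2)]
      · norm_num
    nlinarith [gphi_pos x]
  rw [heq] at hle
  unfold millg at hle
  linarith

lemma Qf_antitone : Antitone Qf := by
  intro a b hab
  apply setIntegral_mono_set integrable_gphi.integrableOn
    (Filter.Eventually.of_forall (fun x => (gphi_pos x).le))
  exact Filter.Eventually.of_forall (fun x hx => lt_of_le_of_lt hab hx)

lemma Qf_pos (t : ℝ) : 0 < Qf t := by
  have h1 : |t| + 1 > 0 := by positivity
  have h2 := mill_lower (|t| + 1)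
  have h3 : 0 < (|t| + 1) / ((|t| + 1) ^ 2 + 1) * gphi (|t| + 1) := by
    have := gphi_pos (|t| + 1); positivity
  have h4 : Qf (|t| + 1) ≤ Qf t := Qf_antitone (by nlinarith [abs_nonneg t, le_abs_self t])
  linarith

lemma Phi_add_Qf (t : ℝ) : Phi t + Qf t = 1 := by
  have := intervalIntegral.integral_Iic_add_Ioi (μ := MeasureTheory.volume) (b := t)
    integrable_gphi.integrableOn integrable_gphi.integrableOn
  unfold Phi Qf
  rw [this, integral_gphi]

lemma Phi_eq_Qf (c : ℝ) : Phi c = Qf (-c) := by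
  unfold Phi Qf
  rw [← integral_comp_neg_Iic]
  congr 1; ext x; rw [gphi_neg]

lemma Phi_zero : Phi 0 = 1 / 2 := by
  have h1 := Phi_add_Qf 0
  have h2 := Phi_eq_Qf 0
  rw [neg_zero] at h2
  linarith

lemma Phi_lt_one (t : ℝ) : Phi t < 1 := by
  have := Qf_pos t; have := Phi_add_Qf t; linarith

lemma Phi_pos (t : ℝ) : 0 < Phi t := by
  rw [Phi_eq_Qf]; exact Qf_pos (-t)

lemma Phi_sub_Phi {a b : ℝ} : Phi b - Phi a = ∫ x in a..b, gphi x :=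
  intervalIntegral.integral_Iic_sub_Iic integrable_gphi.integrableOn
    integrable_gphi.integrableOn

lemma strictMono_Phi : StrictMono Phi := by
  intro a b hab
  have h1 : 0 < ∫ x in a..b, gphi x :=
    intervalIntegral.intervalIntegral_pos_of_pos
      (integrable_gphi.intervalIntegrable) gphi_pos hab
  have := Phi_sub_Phi (a := a) (b := b)
  linarith

lemma continuous_Phi : Continuous Phi := by
  have h1 : Continuous fun b => ∫ x in (0:ℝ)..b, gphi x :=
    intervalIntegral.continuous_primitive
      (fun a b => integrable_gphi.intervalIntegrable) 0
  have h2 : Phi = fun b => (∫ x in (0:ℝ)..b, gphi x) + Phi 0 := by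
    ext b
    have := Phi_sub_Phi (a := (0:ℝ)) (b := b)
    linarith
  rw [h2]
  exact h1.add continuous_const

lemma Qf_tendsto_zero : Tendsto Qf atTop (𝓝 0) := by
  apply squeeze_zero_norm' _ gphi_tendsto_zero
  filter_upwards [Filter.eventually_ge_atTop (1 : ℝ)] with t ht
  rw [Real.norm_of_nonneg (Qf_pos t).le]
  have h1 := mill_upper (lt_of_lt_of_le one_pos ht)
  have h2 : gphi t / t ≤ gphi t := by
    rw [div_le_iff₀ (by linarith)]
    nlinarith [gphi_pos t]
  linarith

lemma Phi_tendsto_zero : Tendsto Phi atBot (𝓝 0) := by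
  have : Phi = Qf ∘ (fun r => -r) := by ext r; exact Phi_eq_Qf r
  rw [this]
  exact Qf_tendsto_zero.comp tendsto_neg_atBot_atTop

lemma Phi_surj {p : ℝ} (hp0 : 0 < p) (hp : p ≤ 1 / 2) : ∃ r, r ≤ 0 ∧ Phi r = p := by
  have h1 : ∀ᶠ r in atBot, Phi r < p :=
    Phi_tendsto_zero.eventually_lt_const hp0
  obtain ⟨a, ha⟩ := h1.exists
  have ha0 : a ≤ 0 := by
    by_contra h
    push_neg at h
    have := strictMono_Phi.monotone (le_of_lt h)
    rw [Phi_zero] at this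
    linarith
  have : p ∈ Set.Icc (Phi a) (Phi 0) := by
    rw [Phi_zero]; exact ⟨ha.le, hp⟩
  obtain ⟨r, hr, hrp⟩ := intermediate_value_Icc ha0 continuous_Phi.continuousOn this
  exact ⟨r, hr.2, hrp⟩

lemma gphi_le_exp (x : ℝ) : gphi x ≤ Real.exp (-(x ^ 2) / 2) := by
  unfold gphi
  have h1 := inv_le_one_of_one_le₀ one_le_sqrt2pi
  nlinarith [Real.exp_pos (-(x^2)/2), sqrt2pi_pos]

lemma exp_div3_le_gphi (x : ℝ) : Real.exp (-(x ^ 2) / 2) / 3 ≤ gphi x := by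
  unfold gphi
  have h1 : (3:ℝ)⁻¹ ≤ (Real.sqrt (2 * Real.pi))⁻¹ := by
    apply inv_anti₀ sqrt2pi_pos sqrt2pi_le_three
  have h2 := Real.exp_pos (-(x^2)/2)
  rw [div_eq_inv_mul]
  exact mul_le_mul_of_nonneg_right h1 h2.le

lemma exp_half_le_two : Real.exp (1/2) ≤ 2 := by
  have h := Real.exp_one_lt_d9
  have hsq : Real.exp (1/2) * Real.exp (1/2) = Real.exp 1 := by
    rw [← Real.exp_add]; norm_num
  nlinarith [Real.exp_pos (1/2 : ℝ)]

lemma gphi_one_ge : 1/6 ≤ gphi 1 := by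
  have h1 := exp_div3_le_gphi 1
  have h2 : Real.exp (-((1:ℝ) ^ 2) / 2) = (Real.exp (1/2))⁻¹ := by
    rw [← Real.exp_neg]; norm_num
  have h3 : (1/2 : ℝ) ≤ (Real.exp (1/2))⁻¹ := by
    have he := Real.exp_pos (1/2 : ℝ)
    rw [le_inv_comm₀ (by norm_num) he]
    have : ((1:ℝ)/2)⁻¹ = 2 := by norm_num
    rw [this]
    exact exp_half_le_two
  rw [h2] at h1
  linarith

lemma Qf_one_ge : 1/12 ≤ Qf 1 := by
  have h := mill_lower 1
  have := gphi_one_ge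
  norm_num at h
  linarith

set_option maxHeartbeats 1000000 in
lemma key_est (t : ℝ) (ht : 0 ≤ t) (hp2 : Qf t ≤ 1/2) :
    (1/12) * Qf t * Real.sqrt (Real.log (1 / Qf t)) ≤ gphi t ∧
    gphi t ≤ 24 * Qf t * Real.sqrt (Real.log (1 / Qf t)) := by
  set p := Qf t with hp_def
  have hp0 : 0 < p := Qf_pos t
  set L := Real.sqrt (Real.log (1 / p)) with hL_def
  have hinv2 : (2:ℝ) ≤ 1 / p := by
    rw [le_div_iff₀ hp0]; linarith
  have hlog0 : 0 ≤ Real.log (1 / p) := Real.log_nonneg (by linarith)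
  have hL2 : L ^ 2 = Real.log (1 / p) := Real.sq_sqrt hlog0
  have hL0 : 0 ≤ L := Real.sqrt_nonneg _
  have hlog_half : 1/2 ≤ Real.log (1 / p) := by
    have h1 : (1/2 : ℝ) ≤ Real.log 2 := (Real.le_log_iff_exp_le two_pos).2 exp_half_le_two
    have h2 : Real.log 2 ≤ Real.log (1 / p) := Real.log_le_log two_pos hinv2
    linarith
  have hLhalf : 1/2 ≤ L := by nlinarith
  rcases le_or_gt t 1 with h1 | h1
  · -- t ≤ 1
    have hq1 : Qf 1 ≤ p := Qf_antitone h1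
    have hp112 : 1/12 ≤ p := le_trans Qf_one_ge hq1
    have hinv12 : 1 / p ≤ 12 := by
      rw [div_le_iff₀ hp0]; linarith
    have hlog11 : Real.log (1 / p) ≤ 11 :=
      le_trans (Real.log_le_sub_one_of_pos (by positivity)) (by linarith)
    have hL4 : L ≤ 4 := by nlinarith
    have hg16 : 1/6 ≤ gphi t := by
      have hmono : gphi 1 ≤ gphi t := by
        unfold gphi
        have he : Real.exp (-((1:ℝ) ^ 2) / 2) ≤ Real.exp (-(t ^ 2) / 2) :=
          Real.exp_le_exp.2 (by nlinarith)
        exact mul_le_mul_of_nonneg_left he (by positivity)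
      linarith [gphi_one_ge]
    constructor
    · nlinarith
    · nlinarith [gphi_le_one t]
  · -- 1 < t
    have ht0 : (0:ℝ) < t := by linarith
    have hmu := mill_upper ht0
    have hpt : p * t ≤ gphi t := (le_div_iff₀ ht0).1 hmu
    have hden : (0:ℝ) < t ^ 2 + 1 := by positivity
    have hml := mill_lower t
    rw [div_mul_eq_mul_div, div_le_iff₀ hden] at hml
    -- hml : t * gphi t ≤ p * (t ^ 2 + 1)
    have hg2pt : gphi t ≤ 2 * p * t := by nlinarith [gphi_pos t, hp0]
    -- upper bound: t ≤ 2 L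
    have hple : p ≤ Real.exp (-(t ^ 2) / 2) := by
      have h2 : gphi t / t ≤ gphi t := by
        rw [div_le_iff₀ ht0]; nlinarith [gphi_pos t]
      linarith [gphi_le_exp t]
    have hlog_ge : t ^ 2 / 2 ≤ Real.log (1 / p) := by
      have := Real.log_le_log hp0 hple
      rw [Real.log_exp] at this
      rw [one_div, Real.log_inv]
      linarith
    have hT2L : t ≤ 2 * L := by nlinarith
    -- lower bound: L ≤ 3 t
    have h6 : 1 / p ≤ 6 * t * Real.exp (t ^ 2 / 2) := by
      have hee : Real.exp (-(t ^ 2) / 2) * Real.exp (t ^ 2 / 2) = 1 := by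
        rw [← Real.exp_add, show -(t ^ 2) / 2 + t ^ 2 / 2 = 0 by ring, Real.exp_zero]
      have hge := exp_div3_le_gphi t
      have hep := Real.exp_pos (t ^ 2 / 2)
      rw [div_le_iff₀ hp0]
      have s1 : Real.exp (-(t ^ 2) / 2) ≤ 3 * gphi t := by linarith
      have s2 : Real.exp (-(t ^ 2) / 2) * Real.exp (t ^ 2 / 2)
          ≤ (3 * gphi t) * Real.exp (t ^ 2 / 2) :=
        mul_le_mul_of_nonneg_right s1 hep.le
      have s3 : gphi t * Real.exp (t ^ 2 / 2) ≤ (2 * p * t) * Real.exp (t ^ 2 / 2) :=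
        mul_le_mul_of_nonneg_right hg2pt hep.le
      nlinarith
    have hlog_le : Real.log (1 / p) ≤ 9 * t ^ 2 := by
      have hlt : Real.log (1 / p) ≤ Real.log (6 * t * Real.exp (t ^ 2 / 2)) :=
        Real.log_le_log (by positivity) h6
      have hsplit : Real.log (6 * t * Real.exp (t ^ 2 / 2)) =
          Real.log 6 + Real.log t + t ^ 2 / 2 := by
        rw [Real.log_mul (by positivity) (Real.exp_ne_zero _),
          Real.log_mul (by norm_num) (by linarith), Real.log_exp]
      have h6le : Real.log 6 ≤ 5 :=
        le_trans (Real.log_le_sub_one_of_pos (by norm_num)) (by norm_num)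
      have htle : Real.log t ≤ t ^ 2 := by
        have := Real.log_le_sub_one_of_pos ht0
        nlinarith
      rw [hsplit] at hlt
      nlinarith
    have hL3t : L ≤ 3 * t := by nlinarith
    have hpL : 0 ≤ p * L := mul_nonneg hp0.le hL0
    constructor
    · have hstep : p * L ≤ p * (3 * t) := mul_le_mul_of_nonneg_left hL3t hp0.le
      have := gphi_pos t
      nlinarith
    · have hstep : p * t ≤ p * (2 * L) := mul_le_mul_of_nonneg_left hT2L hp0.le
      nlinarith

theorem stmt2 :
    ∃ c C : ℝ, 0 < c ∧ 0 < C ∧ ∀ p : ℝ, 0 < p → p ≤ 1 / 2 →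
      c * p * Real.sqrt (Real.log (1 / p)) ≤ gphi (PhiInv p) ∧
      gphi (PhiInv p) ≤ C * p * Real.sqrt (Real.log (1 / p)) := by
  refine ⟨1/12, 24, by norm_num, by norm_num, fun p hp0 hp2 => ?_⟩
  obtain ⟨r, hr0, hrp⟩ := Phi_surj hp0 hp2
  have hPp : Phi (PhiInv p) = p := Function.invFun_eq ⟨r, hrp⟩
  set s := PhiInv p with hs_def
  have hs0 : s ≤ 0 := by
    have h := strictMono_Phi.le_iff_le (a := s) (b := 0)
    rw [Phi_zero, hPp] at h
    exact h.1 hp2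
  have hq : Qf (-s) = p := by rw [← Phi_eq_Qf]; exact hPp
  have hgs : gphi s = gphi (-s) := (gphi_neg s).symm
  obtain ⟨hl, hu⟩ := key_est (-s) (neg_nonneg.2 hs0) (by rw [hq]; exact hp2)
  rw [hq] at hl hu
  rw [hgs]
  exact ⟨hl, hu⟩
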